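/- Let y = (y_1, …, y_M) be a random vector of nonnegative random variables with finite third moments, and suppose that conditionally on y the coordinates x_1, …, x_M of x ∈ ℕ^M are independent with x_m | y ~ Poisson(y_m). Then for all indices m_1, m_2, m_3: cum(x_{m_1}, x_{m_2}, x_{m_3}) = cum(y_{m_1}, y_{m_2}, y_{m_3}) − 2δ(m_1,m_2,m_3) E(x_{m_1}) + δ(m_2,m_3) Cov(x_{m_1},x_{m_2}) + δ(m_1,m_3) Cov(x_{m_1},x_{m_2}) + δ(m_1,m_2) Cov(x_{m_1},x_{m_3}). -/

import Mathlib

/-!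
Given `y = v`, the coordinates of `x` are independent Poisson variables with rates `v m`, and a
Poisson variable `N` of rate `r` has factorial moments `E[N (N - 1) ⋯ (N - k + 1)] = r ^ k`.
Writing `n ^ 2` and `n ^ 3` in falling factorials, the conditional moments of `x` up to order
three are polynomials in `y`:
`E[x_i | y] = y_i`, `E[x_i x_j | y] = y_i y_j + δ_ij y_i` and
`E[x_i x_j x_k | y] = y_i y_j y_k + δ_ij y_i y_k + δ_ik y_i y_j + δ_jk y_i y_j + δ_ijk y_i`.
Taking expectations and expanding the cumulants and covariances into raw moments, the claim
becomes an identity between moments of `y`, which holds because `δ_ij δ_jk = δ_ijk`.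
-/

open MeasureTheory ProbabilityTheory

/-- Covariance of two real random variables. -/
noncomputable def covRV {Ω : Type*} [MeasurableSpace Ω] (P : Measure Ω) (f g : Ω → ℝ) : ℝ :=
  ∫ ω, (f ω - ∫ a, f a ∂P) * (g ω - ∫ a, g a ∂P) ∂P

/-- Third (joint) cumulant of three real random variables. -/
noncomputable def cum3RV {Ω : Type*} [MeasurableSpace Ω] (P : Measure Ω) (f g h : Ω → ℝ) : ℝ :=
  ∫ ω, (f ω - ∫ a, f a ∂P) * (g ω - ∫ a, g a ∂P) * (h ω - ∫ a, h a ∂P) ∂P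

open Real
open scoped NNReal ENNReal Nat

lemma Nat.cast_pow_two_eq_descFactorial {R : Type*} [CommRing R] (n : ℕ) :
    (n : R) ^ 2 = n.descFactorial 2 + n.descFactorial 1 := by
  simp only [← descPochhammer_eval_eq_descFactorial R, descPochhammer_succ_right,
    descPochhammer_zero, Polynomial.eval_mul, Polynomial.eval_X, Polynomial.eval_sub,
    Polynomial.eval_one, Nat.cast_zero, Nat.cast_one, Polynomial.eval_zero]
  ring

lemma Nat.cast_pow_three_eq_descFactorial {R : Type*} [CommRing R] (n : ℕ) :
    (n : R) ^ 3 = n.descFactorial 3 + 3 * n.descFactorial 2 + n.descFactorial 1 := by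
  simp only [← descPochhammer_eval_eq_descFactorial R, descPochhammer_succ_right,
    descPochhammer_zero, Polynomial.eval_mul, Polynomial.eval_X, Polynomial.eval_sub,
    Polynomial.eval_one, Nat.cast_zero, Nat.cast_one, Nat.cast_ofNat,
    Polynomial.eval_zero, Polynomial.eval_ofNat]
  ring

lemma abs_mul_mul_le_pow_three_add (a b c : ℝ) : |a * b * c| ≤ |a| ^ 3 + |b| ^ 3 + |c| ^ 3 := by
  rw [abs_mul, abs_mul]
  have ha := abs_nonneg a
  have hb := abs_nonneg b
  have hc := abs_nonneg c
  nlinarith [mul_nonneg (add_nonneg (add_nonneg ha hb) hc) (add_nonneg (add_nonneg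
    (sq_nonneg (|a| - |b|)) (sq_nonneg (|b| - |c|))) (sq_nonneg (|a| - |c|))),
    pow_nonneg ha 3, pow_nonneg hb 3, pow_nonneg hc 3]

section Monomial

variable {ι R : Type*} [Fintype ι] [DecidableEq ι] [CommMonoid R] (x : ι → R)

lemma mul_eq_prod_pow_ite (i j : ι) :
    x i * x j = ∏ m, x m ^ ((if i = m then 1 else 0) + (if j = m then 1 else 0)) := by
  simp only [pow_add, Finset.prod_mul_distrib, Finset.prod_pow_boole, Finset.mem_univ, if_true]

lemma mul_mul_eq_prod_pow_ite (i j k : ι) :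
    x i * x j * x k = ∏ m, x m ^ ((if i = m then 1 else 0) + (if j = m then 1 else 0)
      + (if k = m then 1 else 0)) := by
  simp only [pow_add, Finset.prod_mul_distrib, Finset.prod_pow_boole, Finset.mem_univ, if_true]

end Monomial

namespace MeasureTheory

variable {Ω : Type*} [MeasurableSpace Ω] {P : Measure Ω}

lemma MemLp.integrable_mul_mul {f g h : Ω → ℝ} (hf : MemLp f 3 P) (hg : MemLp g 3 P)
    (hh : MemLp h 3 P) : Integrable (fun ω => f ω * g ω * h ω) P := by
  have hcube {u : Ω → ℝ} (hu : MemLp u 3 P) : Integrable (fun ω => |u ω| ^ 3) P := by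
    simpa using hu.integrable_norm_pow (p := 3) (by norm_num)
  exact (((hcube hf).add (hcube hg)).add (hcube hh)).mono' (hf.1.mul hg.1 |>.mul hh.1)
    (ae_of_all _ fun ω => abs_mul_mul_le_pow_three_add _ _ _)

lemma MemLp.integrable_mul_of_three [IsFiniteMeasure P] {f g : Ω → ℝ} (hf : MemLp f 3 P)
    (hg : MemLp g 3 P) : Integrable (fun ω => f ω * g ω) P := by
  have h23 : (2 : ℝ≥0∞) ≤ 3 := by norm_num
  exact (hf.mono_exponent h23).integrable_mul (hg.mono_exponent h23)

lemma Measure.measurable_of_measurable_apply_singleton {α β : Type*} [MeasurableSpace α]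
    [MeasurableSpace β] [Countable β] [MeasurableSingletonClass β] {κ : α → Measure β}
    (h : ∀ b, Measurable fun a => κ a {b}) : Measurable κ := by
  refine Measure.measurable_of_measurable_coe _ fun s hs => ?_
  simp_rw [← Measure.tsum_indicator_apply_singleton _ s hs]
  refine Measurable.tsum fun b => ?_
  by_cases hb : b ∈ s <;> simp [hb, h b]

variable {α β : Type*} [MeasurableSpace α] [MeasurableSpace β] {μ : Measure α} [SFinite μ]
  {κ : Kernel α β} [IsSFiniteKernel κ]

lemma Measure.bind_map_prodMk_eq_compProd :
    μ.bind (fun a => (κ a).map (Prod.mk a)) = μ ⊗ₘ κ := by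
  rw [Measure.compProd_eq_comp_prod]
  congr with a : 1
  rw [Kernel.prod_apply, Kernel.id_apply, Measure.dirac_prod]

lemma Measure.integrable_compProd_of_nonneg {f : α × β → ℝ} {g : α → ℝ}
    (hf : AEStronglyMeasurable f (μ ⊗ₘ κ)) (hf0 : 0 ≤ f) (hg : Integrable g μ)
    (hfg : ∀ᵐ a ∂μ, Integrable (fun b => f (a, b)) (κ a) ∧ ∫ b, f (a, b) ∂κ a = g a) :
    Integrable f (μ ⊗ₘ κ) := by
  refine (Measure.integrable_compProd_iff hf).2 ⟨hfg.mono fun a h => h.1, hg.congr ?_⟩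
  filter_upwards [hfg] with a h
  simp_rw [Real.norm_of_nonneg (hf0 _), h.2]

end MeasureTheory

section Cumulants

variable {Ω : Type*} [MeasurableSpace Ω] {P : Measure Ω}

lemma cum3RV_map {Ω' : Type*} [MeasurableSpace Ω'] {Y : Ω → Ω'} (hY : AEMeasurable Y P)
    {f g h : Ω' → ℝ} (hf : AEStronglyMeasurable f (P.map Y))
    (hg : AEStronglyMeasurable g (P.map Y)) (hh : AEStronglyMeasurable h (P.map Y)) :
    cum3RV (P.map Y) f g h
      = cum3RV P (fun ω => f (Y ω)) (fun ω => g (Y ω)) (fun ω => h (Y ω)) := by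
  simp only [cum3RV, integral_map hY hf, integral_map hY hg, integral_map hY hh]
  exact integral_map hY (((hf.sub aestronglyMeasurable_const).mul
    (hg.sub aestronglyMeasurable_const)).mul (hh.sub aestronglyMeasurable_const))

variable [IsProbabilityMeasure P]

lemma covRV_eq_moments {f g : Ω → ℝ} (hf : MemLp f 2 P) (hg : MemLp g 2 P) :
    covRV P f g = ∫ ω, f ω * g ω ∂P - (∫ ω, f ω ∂P) * ∫ ω, g ω ∂P := by
  have hfg : Integrable (fun ω => f ω * g ω) P := hf.integrable_mul hg
  have hf1 := hf.integrable one_le_two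
  have hg1 := hg.integrable one_le_two
  simp only [covRV, sub_mul, mul_sub]
  rw [integral_sub, integral_sub, integral_sub] <;> try fun_prop
  simp [integral_mul_const, integral_const_mul]

lemma cum3RV_eq_moments {f g h : Ω → ℝ} (hf : MemLp f 3 P) (hg : MemLp g 3 P)
    (hh : MemLp h 3 P) :
    cum3RV P f g h = ∫ ω, f ω * g ω * h ω ∂P - (∫ ω, f ω ∂P) * (∫ ω, g ω * h ω ∂P)
      - (∫ ω, g ω ∂P) * (∫ ω, f ω * h ω ∂P) - (∫ ω, h ω ∂P) * (∫ ω, f ω * g ω ∂P)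
      + 2 * (∫ ω, f ω ∂P) * (∫ ω, g ω ∂P) * ∫ ω, h ω ∂P := by
  have hfgh := hf.integrable_mul_mul hg hh
  have hfg := hf.integrable_mul_of_three hg
  have hfh := hf.integrable_mul_of_three hh
  have hgh := hg.integrable_mul_of_three hh
  have hf1 := hf.integrable (by norm_num)
  have hg1 := hg.integrable (by norm_num)
  have hh1 := hh.integrable (by norm_num)
  rw [cum3RV]
  set a := ∫ ω, f ω ∂P
  set b := ∫ ω, g ω ∂P
  set c := ∫ ω, h ω ∂P
  have hexp (ω : Ω) : (f ω - a) * (g ω - b) * (h ω - c) = f ω * g ω * h ω - c * (f ω * g ω)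
      - b * (f ω * h ω) - a * (g ω * h ω)
      + (b * c * f ω + a * c * g ω + a * b * h ω - a * b * c) := by
    ring
  simp only [hexp]
  rw [integral_add, integral_sub, integral_sub, integral_sub, integral_sub, integral_add,
    integral_add] <;> try fun_prop
  simp only [integral_const_mul, integral_const, probReal_univ, smul_eq_mul, one_mul]
  ring

end Cumulants

namespace ProbabilityTheory

lemma hasSum_poissonMeasure_mul_descFactorial (r : ℝ≥0) (k : ℕ) :
    HasSum (fun n => exp (-r) * r ^ n / n ! * n.descFactorial k) ((r : ℝ) ^ k) := by
  rw [← hasSum_nat_add_iff' k, Finset.sum_eq_zero fun n hn => by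
    simp [Nat.descFactorial_eq_zero_iff_lt.2 (Finset.mem_range.1 hn)], sub_zero]
  have hshift (n : ℕ) : exp (-r) * r ^ (n + k) / (n + k)! * ((n + k).descFactorial k : ℝ)
      = (r : ℝ) ^ k * (exp (-r) * r ^ n / n !) := by
    have hfac : (n ! : ℝ) * (n + k).descFactorial k = (n + k)! := by
      exact_mod_cast Nat.add_sub_cancel n k ▸ Nat.factorial_mul_descFactorial (Nat.le_add_left k n)
    rw [← hfac]
    field_simp
    ring
  simpa only [hshift, mul_one] using (hasSum_one_poissonMeasure r).mul_left ((r : ℝ) ^ k)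

lemma integrable_natCast_pow_poissonMeasure (r : ℝ≥0) (k : ℕ) :
    Integrable (fun n : ℕ => (n : ℝ) ^ k) Po(r) := by
  rw [integrable_poissonMeasure_iff]
  refine .of_nonneg_of_le (fun n => by positivity) (fun n => ?_)
    ((Real.summable_pow_div_factorial (r * exp 1)).mul_left (k ! * exp (-r)))
  have hpow : (n : ℝ) ^ k ≤ k ! * exp 1 ^ n := by
    rw [Real.exp_one_pow, ← div_le_iff₀' (by positivity)]
    exact Real.pow_div_factorial_le_exp _ n.cast_nonneg k
  rw [norm_pow, Real.norm_natCast, mul_pow]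
  calc exp (-r) * r ^ n / n ! * (n : ℝ) ^ k ≤ exp (-r) * r ^ n / n ! * (k ! * exp 1 ^ n) := by
        gcongr
    _ = _ := by ring

lemma integral_natCast_poissonMeasure (r : ℝ≥0) : ∫ n, (n : ℝ) ∂Po(r) = r := by
  rw [integral_poissonMeasure]
  simpa using (hasSum_poissonMeasure_mul_descFactorial r 1).tsum_eq

lemma integral_natCast_pow_two_poissonMeasure (r : ℝ≥0) :
    ∫ n, (n : ℝ) ^ 2 ∂Po(r) = r ^ 2 + r := by
  rw [integral_poissonMeasure]
  refine HasSum.tsum_eq ?_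
  have h := (hasSum_poissonMeasure_mul_descFactorial r 2).add
    (hasSum_poissonMeasure_mul_descFactorial r 1)
  rw [pow_one] at h
  exact h.congr_fun fun n => by rw [smul_eq_mul, Nat.cast_pow_two_eq_descFactorial]; ring

lemma integral_natCast_pow_three_poissonMeasure (r : ℝ≥0) :
    ∫ n, (n : ℝ) ^ 3 ∂Po(r) = r ^ 3 + 3 * r ^ 2 + r := by
  rw [integral_poissonMeasure]
  refine HasSum.tsum_eq ?_
  have h := ((hasSum_poissonMeasure_mul_descFactorial r 3).add
    ((hasSum_poissonMeasure_mul_descFactorial r 2).mul_left 3)).add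
    (hasSum_poissonMeasure_mul_descFactorial r 1)
  rw [pow_one] at h
  exact h.congr_fun fun n => by rw [smul_eq_mul, Nat.cast_pow_three_eq_descFactorial]; ring

section PiPoisson

variable {ι : Type*} [Fintype ι] (r : ι → ℝ≥0)

lemma integral_prod_pow_pi_poissonMeasure (e : ι → ℕ) (s : Finset ι) (he : ∀ i ∉ s, e i = 0) :
    ∫ n, ∏ i, (n i : ℝ) ^ e i ∂Measure.pi (fun i => Po(r i))
      = ∏ i ∈ s, ∫ k, (k : ℝ) ^ e i ∂Po(r i) := by
  rw [integral_fintype_prod_eq_prod (fun i (k : ℕ) => (k : ℝ) ^ e i)]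
  exact (Finset.prod_subset s.subset_univ fun i _ hi => by simp [he i hi]).symm

lemma integral_eval_pi_poissonMeasure (i : ι) :
    ∫ n, (n i : ℝ) ∂Measure.pi (fun i => Po(r i)) = r i :=
  (integral_comp_eval (μ := fun i => Po(r i)) (f := (Nat.cast : ℕ → ℝ)) .of_discrete).trans
    (integral_natCast_poissonMeasure (r i))

variable [DecidableEq ι]

lemma integral_eval_mul_eval_pi_poissonMeasure (i j : ι) :
    ∫ n, (n i : ℝ) * n j ∂Measure.pi (fun i => Po(r i))
      = r i * r j + (if i = j then 1 else 0) * r i := by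
  rw [funext fun n : ι → ℕ => mul_eq_prod_pow_ite (fun m => (n m : ℝ)) i j,
    integral_prod_pow_pi_poissonMeasure r _ {i, j} fun m hm => by
      simp only [Finset.mem_insert, Finset.mem_singleton, not_or] at hm
      simp [Ne.symm hm.1, Ne.symm hm.2]]
  rcases eq_or_ne i j with rfl | hij
  · simp [integral_natCast_pow_two_poissonMeasure, ← sq]
  · simp [Finset.prod_pair hij, hij, Ne.symm hij, integral_natCast_poissonMeasure]

lemma integrable_eval_mul_eval_mul_eval_pi_poissonMeasure (i j k : ι) :
    Integrable (fun n : ι → ℕ => (n i : ℝ) * n j * n k) (Measure.pi fun i => Po(r i)) := by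
  rw [funext fun n : ι → ℕ => mul_mul_eq_prod_pow_ite (fun m => (n m : ℝ)) i j k]
  exact Integrable.fintype_prod fun m => integrable_natCast_pow_poissonMeasure (r m) _

lemma integral_eval_mul_eval_mul_eval_pi_poissonMeasure (i j k : ι) :
    ∫ n, (n i : ℝ) * n j * n k ∂Measure.pi (fun i => Po(r i))
      = r i * r j * r k + (if i = j then 1 else 0) * (r i * r k)
        + (if i = k then 1 else 0) * (r i * r j) + (if j = k then 1 else 0) * (r i * r j)
        + (if i = j ∧ j = k then 1 else 0) * r i := by
  rw [funext fun n : ι → ℕ => mul_mul_eq_prod_pow_ite (fun m => (n m : ℝ)) i j k,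
    integral_prod_pow_pi_poissonMeasure r _ {i, j, k} fun m hm => by
      simp only [Finset.mem_insert, Finset.mem_singleton, not_or] at hm
      simp [Ne.symm hm.1, Ne.symm hm.2.1, Ne.symm hm.2.2]]
  by_cases hij : i = j <;> by_cases hik : i = k <;> by_cases hjk : j = k <;> subst_vars <;>
    simp [Finset.insert_eq_of_mem, Finset.prod_insert, *, Ne.symm, integral_natCast_poissonMeasure,
      integral_natCast_pow_two_poissonMeasure, integral_natCast_pow_three_poissonMeasure] <;> ring

end PiPoisson

noncomputable def poissonPiKernel (ι : Type*) [Fintype ι] : Kernel (ι → ℝ) (ι → ℕ) where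
  toFun v := Measure.pi fun i => Po((v i).toNNReal)
  measurable' := Measure.measurable_of_measurable_apply_singleton fun n => by
    simp_rw [← Set.univ_pi_singleton, Measure.pi_pi, poissonMeasure_singleton]
    fun_prop

variable {ι : Type*} [Fintype ι]

lemma poissonPiKernel_apply (v : ι → ℝ) :
    poissonPiKernel ι v = Measure.pi fun i => Po((v i).toNNReal) := rfl

instance : IsMarkovKernel (poissonPiKernel ι) :=
  ⟨fun v => by rw [poissonPiKernel_apply]; infer_instance⟩

end ProbabilityTheory

section PoissonMixture

variable {ι : Type*} [Fintype ι] [DecidableEq ι] {μ : Measure (ι → ℝ)} [IsProbabilityMeasure μ]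

lemma integrable_snd_mul_snd_mul_snd_compProd_poissonPiKernel (hμ : ∀ᵐ v ∂μ, ∀ i, 0 ≤ v i)
    (hL3 : ∀ i, MemLp (fun v => v i) 3 μ) (i j k : ι) :
    Integrable (fun ω : (ι → ℝ) × (ι → ℕ) => (ω.2 i : ℝ) * ω.2 j * ω.2 k)
      (μ ⊗ₘ poissonPiKernel ι) := by
  have hy1 (c : ℝ) : Integrable (fun v => c * v i) μ :=
    ((hL3 i).integrable (by norm_num)).const_mul c
  have hy2 (a b : ι) : Integrable (fun v => v a * v b) μ :=
    (hL3 a).integrable_mul_of_three (hL3 b)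
  have hy3 : Integrable (fun v => v i * v j * v k) μ := (hL3 i).integrable_mul_mul (hL3 j) (hL3 k)
  refine Measure.integrable_compProd_of_nonneg (by fun_prop) (fun ω => by positivity)
    (g := fun v => v i * v j * v k + (if i = j then 1 else 0) * (v i * v k)
        + (if i = k then 1 else 0) * (v i * v j) + (if j = k then 1 else 0) * (v i * v j)
        + (if i = j ∧ j = k then 1 else 0) * v i) ?_ (hμ.mono fun v hv =>
      ⟨integrable_eval_mul_eval_mul_eval_pi_poissonMeasure _ i j k, ?_⟩)
  · fun_prop
  · simp [poissonPiKernel_apply, integral_eval_mul_eval_mul_eval_pi_poissonMeasure, hv]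

lemma memLp_snd_compProd_poissonPiKernel (hμ : ∀ᵐ v ∂μ, ∀ i, 0 ≤ v i)
    (hL3 : ∀ i, MemLp (fun v => v i) 3 μ) (i : ι) :
    MemLp (fun ω : (ι → ℝ) × (ι → ℕ) => (ω.2 i : ℝ)) 3 (μ ⊗ₘ poissonPiKernel ι) := by
  refine (integrable_norm_rpow_iff (by fun_prop) (by norm_num) (by norm_num)).1 ?_
  simpa [pow_three, mul_assoc]
    using integrable_snd_mul_snd_mul_snd_compProd_poissonPiKernel hμ hL3 i i i

lemma integral_snd_compProd_poissonPiKernel (hμ : ∀ᵐ v ∂μ, ∀ i, 0 ≤ v i)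
    (hL3 : ∀ i, MemLp (fun v => v i) 3 μ) (i : ι) :
    ∫ ω, (ω.2 i : ℝ) ∂(μ ⊗ₘ poissonPiKernel ι) = ∫ v, v i ∂μ := by
  rw [Measure.integral_compProd ((memLp_snd_compProd_poissonPiKernel hμ hL3 i).integrable
    (by norm_num))]
  refine integral_congr_ae (hμ.mono fun v hv => ?_)
  simp [poissonPiKernel_apply, integral_eval_pi_poissonMeasure, hv]

lemma integral_snd_mul_snd_compProd_poissonPiKernel (hμ : ∀ᵐ v ∂μ, ∀ i, 0 ≤ v i)
    (hL3 : ∀ i, MemLp (fun v => v i) 3 μ) (i j : ι) :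
    ∫ ω, (ω.2 i : ℝ) * ω.2 j ∂(μ ⊗ₘ poissonPiKernel ι)
      = ∫ v, v i * v j ∂μ + (if i = j then 1 else 0) * ∫ v, v i ∂μ := by
  have hx := memLp_snd_compProd_poissonPiKernel hμ hL3
  have hy1 (c : ℝ) : Integrable (fun v => c * v i) μ :=
    ((hL3 i).integrable (by norm_num)).const_mul c
  have hy2 : Integrable (fun v => v i * v j) μ := (hL3 i).integrable_mul_of_three (hL3 j)
  rw [Measure.integral_compProd ((hx i).integrable_mul_of_three (hx j)), ← integral_const_mul,
    ← integral_add hy2 (hy1 _)]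
  refine integral_congr_ae (hμ.mono fun v hv => ?_)
  simp [poissonPiKernel_apply, integral_eval_mul_eval_pi_poissonMeasure, hv]

lemma integral_snd_mul_snd_mul_snd_compProd_poissonPiKernel (hμ : ∀ᵐ v ∂μ, ∀ i, 0 ≤ v i)
    (hL3 : ∀ i, MemLp (fun v => v i) 3 μ) (i j k : ι) :
    ∫ ω, (ω.2 i : ℝ) * ω.2 j * ω.2 k ∂(μ ⊗ₘ poissonPiKernel ι)
      = ∫ v, v i * v j * v k ∂μ + (if i = j then 1 else 0) * ∫ v, v i * v k ∂μ
        + (if i = k then 1 else 0) * ∫ v, v i * v j ∂μ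
        + (if j = k then 1 else 0) * ∫ v, v i * v j ∂μ
        + (if i = j ∧ j = k then 1 else 0) * ∫ v, v i ∂μ := by
  have hy1 (c : ℝ) : Integrable (fun v => c * v i) μ :=
    ((hL3 i).integrable (by norm_num)).const_mul c
  have hy2 (a b : ι) : Integrable (fun v => v a * v b) μ :=
    (hL3 a).integrable_mul_of_three (hL3 b)
  have hy3 : Integrable (fun v => v i * v j * v k) μ := (hL3 i).integrable_mul_mul (hL3 j) (hL3 k)
  simp only [← integral_const_mul]
  rw [Measure.integral_compProd
      (integrable_snd_mul_snd_mul_snd_compProd_poissonPiKernel hμ hL3 i j k),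
    ← integral_add, ← integral_add, ← integral_add, ← integral_add] <;> try fun_prop
  refine integral_congr_ae (hμ.mono fun v hv => ?_)
  simp [poissonPiKernel_apply, integral_eval_mul_eval_mul_eval_pi_poissonMeasure, hv]

end PoissonMixture

theorem cum3_of_conditionally_poisson_general
    (M : ℕ)
    (μ : Measure (Fin M → ℝ)) [IsProbabilityMeasure μ]
    (hnonneg : ∀ᵐ v ∂μ, ∀ m, 0 ≤ v m)
    (hL3 : ∀ m, MemLp (fun v => v m) 3 μ)
    (P : Measure ((Fin M → ℝ) × (Fin M → ℕ)))
    (hP : P = μ.bind (fun v =>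
      (Measure.pi fun m : Fin M => poissonMeasure (v m).toNNReal).map (fun n => (v, n)))) :
    ∀ m1 m2 m3 : Fin M,
      cum3RV P (fun ω => (ω.2 m1 : ℝ)) (fun ω => (ω.2 m2 : ℝ)) (fun ω => (ω.2 m3 : ℝ))
        = cum3RV P (fun ω => ω.1 m1) (fun ω => ω.1 m2) (fun ω => ω.1 m3)
          - 2 * (if m1 = m2 ∧ m2 = m3 then 1 else 0) * (∫ ω, (ω.2 m1 : ℝ) ∂P)
          + (if m2 = m3 then 1 else 0)
              * covRV P (fun ω => (ω.2 m1 : ℝ)) (fun ω => (ω.2 m2 : ℝ))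
          + (if m1 = m3 then 1 else 0)
              * covRV P (fun ω => (ω.2 m1 : ℝ)) (fun ω => (ω.2 m2 : ℝ))
          + (if m1 = m2 then 1 else 0)
              * covRV P (fun ω => (ω.2 m1 : ℝ)) (fun ω => (ω.2 m3 : ℝ)) := by
  intro i j k
  have hPκ : P = μ ⊗ₘ poissonPiKernel (Fin M) :=
    hP.trans (Measure.bind_map_prodMk_eq_compProd (κ := poissonPiKernel (Fin M)))
  subst hPκ
  have hx := memLp_snd_compProd_poissonPiKernel hnonneg hL3
  have hx2 (m : Fin M) := (hx m).mono_exponent (by norm_num : (2 : ℝ≥0∞) ≤ 3)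
  have hy := cum3RV_map (P := μ ⊗ₘ poissonPiKernel (Fin M)) measurable_fst.aemeasurable
    (measurable_pi_apply i).aestronglyMeasurable (measurable_pi_apply j).aestronglyMeasurable
    (measurable_pi_apply k).aestronglyMeasurable
  rw [← Measure.fst, Measure.fst_compProd] at hy
  rw [← hy, cum3RV_eq_moments (hx i) (hx j) (hx k), cum3RV_eq_moments (hL3 i) (hL3 j) (hL3 k),
    covRV_eq_moments (hx2 i) (hx2 j), covRV_eq_moments (hx2 i) (hx2 k)]
  simp only [integral_snd_compProd_poissonPiKernel hnonneg hL3,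
    integral_snd_mul_snd_compProd_poissonPiKernel hnonneg hL3,
    integral_snd_mul_snd_mul_snd_compProd_poissonPiKernel hnonneg hL3]
  by_cases hij : i = j <;> by_cases hik : i = k <;> by_cases hjk : j = k <;> subst_vars <;>
    simp_all <;> ring

/-- If, conditionally on a nonnegative random vector `y` with finite third
moments, the coordinates of `x ∈ ℕ^M` are independent with `x_m | y ~ Poisson(y_m)`, then
`cum(x_{m₁},x_{m₂},x_{m₃}) = cum(y_{m₁},y_{m₂},y_{m₃}) − 2δ(m₁,m₂,m₃) E(x_{m₁})
 + δ(m₂,m₃) Cov(x_{m₁},x_{m₂}) + δ(m₁,m₃) Cov(x_{m₁},x_{m₂}) + δ(m₁,m₂) Cov(x_{m₁},x_{m₃})`. -/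
theorem cum3_of_conditionally_poisson
    (M : ℕ) (hM : 1 ≤ M)
    (μ : Measure (Fin M → ℝ)) [IsProbabilityMeasure μ]
    (hnonneg : ∀ᵐ v ∂μ, ∀ m, 0 ≤ v m)
    (hL3 : ∀ m, MemLp (fun v => v m) 3 μ)
    (P : Measure ((Fin M → ℝ) × (Fin M → ℕ)))
    (hP : P = μ.bind (fun v =>
      (Measure.pi fun m : Fin M => poissonMeasure (v m).toNNReal).map (fun n => (v, n)))) :
    ∀ m1 m2 m3 : Fin M,
      cum3RV P (fun ω => (ω.2 m1 : ℝ)) (fun ω => (ω.2 m2 : ℝ)) (fun ω => (ω.2 m3 : ℝ))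
        = cum3RV P (fun ω => ω.1 m1) (fun ω => ω.1 m2) (fun ω => ω.1 m3)
          - 2 * (if m1 = m2 ∧ m2 = m3 then 1 else 0) * (∫ ω, (ω.2 m1 : ℝ) ∂P)
          + (if m2 = m3 then 1 else 0)
              * covRV P (fun ω => (ω.2 m1 : ℝ)) (fun ω => (ω.2 m2 : ℝ))
          + (if m1 = m3 then 1 else 0)
              * covRV P (fun ω => (ω.2 m1 : ℝ)) (fun ω => (ω.2 m2 : ℝ))
          + (if m1 = m2 then 1 else 0)
              * covRV P (fun ω => (ω.2 m1 : ℝ)) (fun ω => (ω.2 m3 : ℝ)) :=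
  cum3_of_conditionally_poisson_general M μ hnonneg hL3 P hP
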